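/- arXiv:2010.09800 — 4 statements merged into one kernel-verified Lean document; each statement's English description precedes it below -/
import Mathlib

section
/- Let φ, G, C₀, C₁, D > 0 be constants. Let (ω_k)_{k≥1} be a positive nonincreasing real sequence satisfying ω_{k+1} − ω_k + 2φ·ω_k·ω_{k+1} ≥ C₁·ω_{k+1}² for all k, and let (Δ_k)_{k≥1} be a real sequence with 0 ≤ Δ_k ≤ D for all k. Let k₀ be any index with ω_{k₀} ≤ C₁/(2G), and set λ₀ = (2GD + 2C₀φ)/(C₁φ). Then for every λ ≥ λ₀ and every k ≥ k₀, the sequence ψ_k := λ·ω_k + D/φ satisfies ψ_{k+1} ≥ (1 − 2ω_{k+1}φ + G·ω_{k+1}²)·ψ_k + C₀·ω_{k+1}² + 2Δ_k·ω_{k+1}. -/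
/-- Lemma 4 (`lemma:4`): the sequence `ψ_k = λ·ω_k + D/φ` is a supersolution
of the one-step recursive inequality arising in the CSGLD convergence analysis. -/
theorem supersolution_lemma4
    (φ G C₀ C₁ D : ℝ) (hφ : 0 < φ) (hG : 0 < G) (hC₀ : 0 < C₀) (hC₁ : 0 < C₁)
    (hD : 0 < D)
    (ω : ℕ → ℝ) (hωpos : ∀ k, 0 < ω k) (hωanti : ∀ k, ω (k + 1) ≤ ω k)
    (hstep : ∀ k, ω (k + 1) - ω k + 2 * φ * ω k * ω (k + 1) ≥ C₁ * ω (k + 1) ^ 2)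
    (Δ : ℕ → ℝ) (hΔ : ∀ k, 0 ≤ Δ k ∧ Δ k ≤ D)
    (k₀ : ℕ) (hk₀ : ω k₀ ≤ C₁ / (2 * G))
    (lam : ℝ) (hlam : lam ≥ (2 * G * D + 2 * C₀ * φ) / (C₁ * φ)) :
    ∀ k ≥ k₀,
      lam * ω (k + 1) + D / φ ≥
        (1 - 2 * ω (k + 1) * φ + G * ω (k + 1) ^ 2) * (lam * ω k + D / φ)
          + C₀ * ω (k + 1) ^ 2 + 2 * Δ k * ω (k + 1) := by
  intro k hk
  have hω' := hωpos (k + 1)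
  have hωk := hωpos k
  have hstepk := hstep k
  obtain ⟨hΔ0, hΔD⟩ := hΔ k
  have hωle : ω k ≤ C₁ / (2 * G) :=
    le_trans (antitone_nat_of_succ_le hωanti hk) hk₀
  have hlam0 : (0:ℝ) < (2 * G * D + 2 * C₀ * φ) / (C₁ * φ) := by positivity
  have hlamp : 0 < lam := lt_of_lt_of_le hlam0 hlam
  have h2 : C₁ - G * ω k ≥ C₁ / 2 := by
    have ha : G * ω k ≤ G * (C₁ / (2 * G)) := mul_le_mul_of_nonneg_left hωle hG.le
    have hb : G * (C₁ / (2 * G)) = C₁ / 2 := by field_simp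
    linarith [hb ▸ ha]
  have key : lam * (C₁ - G * ω k) ≥ G * (D / φ) + C₀ := by
    have h3 : lam * (C₁ - G * ω k) ≥ (2 * G * D + 2 * C₀ * φ) / (C₁ * φ) * (C₁ / 2) :=
      mul_le_mul hlam h2 (by positivity) hlamp.le
    have h4 : (2 * G * D + 2 * C₀ * φ) / (C₁ * φ) * (C₁ / 2) = G * (D / φ) + C₀ := by
      field_simp
    linarith [h4 ▸ h3]
  have h1 : lam * (C₁ * ω (k + 1) ^ 2)
      ≤ lam * (ω (k + 1) - ω k + 2 * φ * ω k * ω (k + 1)) :=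
    mul_le_mul_of_nonneg_left hstepk hlamp.le
  have hsq : (0:ℝ) ≤ ω (k + 1) ^ 2 := sq_nonneg _
  have key2 : ω (k + 1) ^ 2 * (lam * (C₁ - G * ω k)) ≥ ω (k + 1) ^ 2 * (G * (D / φ) + C₀) :=
    mul_le_mul_of_nonneg_left key hsq
  have hDφ : φ * (D / φ) = D := mul_div_cancel₀ D hφ.ne'
  have hΔω : (D - Δ k) * ω (k + 1) ≥ 0 := mul_nonneg (by linarith) hω'.le
  nlinarith [h1, key2, hΔω, hDφ]
end

section
/- Let φ, G > 0, let (ω_k) be a positive real sequence, and let k₀ < K be integers. For k₀ ≤ k ≤ K define Λ_k^K = 2ω_k·∏_{j=k}^{K−1}(1 − 2ω_{j+1}φ + G·ω_{j+1}²), where the empty product is 1 (so Λ_K^K = 2ω_K). Assume that for every k with k₀ ≤ k < K we have both 0 < 1 − 2ω_{k+1}φ + G·ω_{k+1}² and (ω_{k+1} − ω_k)/(ω_k·ω_{k+1}) + 2φ − G·ω_{k+1} > 0. Then the sequence k ↦ Λ_k^K is nondecreasing on {k₀, …, K}, and Λ_k^K ≤ 2ω_K for all k₀ ≤ k ≤ K.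 -/
/-- Lemma 6 (restatement of Lemma 25 of Benveniste et al.):
monotonicity and boundedness of the weight sequence
`Λ_k^K = 2ω_k · ∏_{j=k}^{K-1} (1 - 2ω_{j+1}φ + Gω_{j+1}²)`. -/
theorem weights_monotone_bounded
    (φ G : ℝ) (hφ : 0 < φ) (hG : 0 < G)
    (ω : ℕ → ℝ) (hωpos : ∀ k, 0 < ω k)
    (k₀ K : ℕ) (hk₀K : k₀ < K)
    (Λ : ℕ → ℝ)
    (hΛ : ∀ k, Λ k = 2 * ω k *
      ∏ j ∈ Finset.Ico k K, (1 - 2 * ω (j + 1) * φ + G * ω (j + 1) ^ 2))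
    (hpos : ∀ k, k₀ ≤ k → k < K → 0 < 1 - 2 * ω (k + 1) * φ + G * ω (k + 1) ^ 2)
    (hstep : ∀ k, k₀ ≤ k → k < K →
      (ω (k + 1) - ω k) / (ω k * ω (k + 1)) + 2 * φ - G * ω (k + 1) > 0) :
    (∀ k k', k₀ ≤ k → k ≤ k' → k' ≤ K → Λ k ≤ Λ k') ∧
      (∀ k, k₀ ≤ k → k ≤ K → Λ k ≤ 2 * ω K) := by
  have hprodpos : ∀ k, k₀ ≤ k →
      0 < ∏ j ∈ Finset.Ico k K, (1 - 2 * ω (j + 1) * φ + G * ω (j + 1) ^ 2) := by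
    intro k hk
    apply Finset.prod_pos
    intro j hj
    rw [Finset.mem_Ico] at hj
    exact hpos j (le_trans hk hj.1) hj.2
  have hsucc : ∀ k, k₀ ≤ k → k < K → Λ k ≤ Λ (k + 1) := by
    intro k hk hkK
    rw [hΛ k, hΛ (k + 1)]
    rw [Finset.prod_eq_prod_Ico_succ_bot hkK]
    have hP : 0 < ∏ j ∈ Finset.Ico (k+1) K, (1 - 2 * ω (j + 1) * φ + G * ω (j + 1) ^ 2) :=
      hprodpos (k+1) (le_trans hk (Nat.le_succ k))
    have hd : 0 < ω k * ω (k + 1) := mul_pos (hωpos k) (hωpos (k+1))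
    have h1 := hstep k hk hkK
    have h2 : (ω (k + 1) - ω k) / (ω k * ω (k + 1)) > -(2 * φ - G * ω (k + 1)) := by
      linarith
    have h3 : ω (k + 1) - ω k > -(2 * φ - G * ω (k + 1)) * (ω k * ω (k + 1)) :=
      (lt_div_iff₀ hd).mp h2
    have hkey : ω k * (1 - 2 * ω (k + 1) * φ + G * ω (k + 1) ^ 2) ≤ ω (k + 1) := by
      nlinarith
    calc 2 * ω k * ((1 - 2 * ω (k + 1) * φ + G * ω (k + 1) ^ 2) *
          ∏ j ∈ Finset.Ico (k+1) K, (1 - 2 * ω (j + 1) * φ + G * ω (j + 1) ^ 2))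
        = 2 * (ω k * (1 - 2 * ω (k + 1) * φ + G * ω (k + 1) ^ 2)) *
          ∏ j ∈ Finset.Ico (k+1) K, (1 - 2 * ω (j + 1) * φ + G * ω (j + 1) ^ 2) := by ring
      _ ≤ 2 * ω (k + 1) *
          ∏ j ∈ Finset.Ico (k+1) K, (1 - 2 * ω (j + 1) * φ + G * ω (j + 1) ^ 2) := by
          apply mul_le_mul_of_nonneg_right _ (le_of_lt hP)
          linarith
  have hmono : ∀ k k', k₀ ≤ k → k ≤ k' → k' ≤ K → Λ k ≤ Λ k' := by
    intro k k' hk hkk' hk'K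
    induction k' with
    | zero =>
      have : k = 0 := Nat.le_zero.mp hkk'
      rw [this]
    | succ n ih =>
      rcases Nat.lt_or_ge k (n+1) with h | h
      · have hn : k ≤ n := Nat.lt_succ_iff.mp h
        have hnK : n < K := Nat.lt_of_lt_of_le (Nat.lt_succ_self n) hk'K
        have := ih hn (le_of_lt hnK)
        exact le_trans this (hsucc n (le_trans hk hn) hnK)
      · have : k = n + 1 := le_antisymm hkk' h
        rw [this]
  refine ⟨hmono, fun k hk hkK => ?_⟩
  have := hmono k K hk hkK le_rfl
  rwa [hΛ K, Finset.Ico_self, Finset.prod_empty, mul_one] at this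
end

section
/- Let φ, G, C₀ be real constants, (ω_k) a positive real sequence, and (Δ_k), (z_k), (t_k), (ψ_k) real sequences, and let k₀ be an integer. For k₀ ≤ j ≤ k define Λ_j^k = 2ω_j·∏_{i=j}^{k−1}(1 − 2ω_{i+1}φ + G·ω_{i+1}²), with Λ_k^k = 2ω_k. Assume for all k ≥ k₀: (i) 1 − 2ω_{k+1}φ + G·ω_{k+1}² ≥ 0; (ii) t_{k+1} ≤ (1 − 2ω_{k+1}φ + G·ω_{k+1}²)·t_k + C₀·ω_{k+1}² + 2Δ_k·ω_{k+1} + 2ω_{k+1}·(z_k − z_{k+1}); (iii) ψ_{k+1} ≥ (1 − 2ω_{k+1}φ + G·ω_{k+1}²)·ψ_k + C₀·ω_{k+1}² + 2Δ_k·ω_{k+1}; and (iv) t_{k₀} ≤ ψ_{k₀}. Then for all k ≥ k₀: t_k ≤ ψ_k + Σ_{j=k₀+1}^{k} Λ_j^k·(z_{j−1} − z_j). -/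
/-- Lemma 7 (`lemma:3-all`): comparison by induction bounding the error
sequence `t_k` by the supersolution `ψ_k` plus a weighted telescoping
correction with weights `Λ_j^k = 2ω_j · ∏_{i=j}^{k-1}(1 - 2ω_{i+1}φ + Gω_{i+1}²)`. -/
theorem comparison_lemma7
    (φ G C₀ : ℝ)
    (ω : ℕ → ℝ) (hωpos : ∀ k, 0 < ω k)
    (Δ z t ψ : ℕ → ℝ) (k₀ : ℕ)
    (Λ : ℕ → ℕ → ℝ)
    (hΛ : ∀ j k, Λ j k = 2 * ω j *
      ∏ i ∈ Finset.Ico j k, (1 - 2 * ω (i + 1) * φ + G * ω (i + 1) ^ 2))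
    (hfac : ∀ k ≥ k₀, 0 ≤ 1 - 2 * ω (k + 1) * φ + G * ω (k + 1) ^ 2)
    (ht : ∀ k ≥ k₀,
      t (k + 1) ≤ (1 - 2 * ω (k + 1) * φ + G * ω (k + 1) ^ 2) * t k
        + C₀ * ω (k + 1) ^ 2 + 2 * Δ k * ω (k + 1)
        + 2 * ω (k + 1) * (z k - z (k + 1)))
    (hψ : ∀ k ≥ k₀,
      ψ (k + 1) ≥ (1 - 2 * ω (k + 1) * φ + G * ω (k + 1) ^ 2) * ψ k
        + C₀ * ω (k + 1) ^ 2 + 2 * Δ k * ω (k + 1))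
    (hinit : t k₀ ≤ ψ k₀) :
    ∀ k ≥ k₀,
      t k ≤ ψ k + ∑ j ∈ Finset.Icc (k₀ + 1) k, Λ j k * (z (j - 1) - z j) := by
  intro k hk
  induction k, hk using Nat.le_induction with
  | base =>
    simpa using hinit
  | succ k hk ih =>
    have hfa := hfac k hk
    have h1 := ht k hk
    have h2 := hψ k hk
    set a := 1 - 2 * ω (k + 1) * φ + G * ω (k + 1) ^ 2 with ha
    have hsum : ∑ j ∈ Finset.Icc (k₀ + 1) (k + 1), Λ j (k + 1) * (z (j - 1) - z j)
        = a * ∑ j ∈ Finset.Icc (k₀ + 1) k, Λ j k * (z (j - 1) - z j)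
          + 2 * ω (k + 1) * (z k - z (k + 1)) := by
      rw [Finset.sum_Icc_succ_top (Nat.succ_le_succ hk), Finset.mul_sum]
      have hlast : Λ (k + 1) (k + 1) = 2 * ω (k + 1) := by
        simp [hΛ]
      have hterm : ∀ j ∈ Finset.Icc (k₀ + 1) k,
          Λ j (k + 1) * (z (j - 1) - z j) = a * (Λ j k * (z (j - 1) - z j)) := by
        intro j hj
        have hjk : j ≤ k := (Finset.mem_Icc.mp hj).2
        rw [hΛ, hΛ, Finset.prod_Ico_succ_top hjk]
        ring
      rw [Finset.sum_congr rfl hterm, hlast]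
      simp
    rw [hsum]
    have hmul : a * t k ≤ a * (ψ k + ∑ j ∈ Finset.Icc (k₀ + 1) k, Λ j k * (z (j - 1) - z j)) :=
      mul_le_mul_of_nonneg_left ih hfa
    nlinarith [hmul]
end

section
/- Let φ, G, C₀, C₁, Q, C, D > 0 be constants. Let (ω_k)_{k≥1} be a positive nonincreasing sequence satisfying, for all k, ω_{k+1} − ω_k + 2φ·ω_k·ω_{k+1} ≥ C₁·ω_{k+1}², and let k₀ be an index such that ω_{k₀} ≤ C₁/(2G) and 1 − 2ω_{k+1}φ + G·ω_{k+1}² > 0 for all k ≥ k₀. Let (Δ_k) be reals with 0 ≤ Δ_k ≤ D, let (z_k) be reals with |z_k| ≤ 2QC, and let (t_k) be nonnegative reals satisfying, for all k ≥ k₀, t_{k+1} ≤ (1 − 2ω_{k+1}φ + G·ω_{k+1}²)·t_k + C₀·ω_{k+1}² + 2Δ_k·ω_{k+1} + 2ω_{k+1}·(z_k − z_{k+1}). Set λ₀ = (2GD + 2C₀φ)/(C₁φ) and assume t_{k₀} ≤ λ₀·ω_{k₀} + D/φ. Then for all k ≥ k₀: t_k ≤ (λ₀ + 12QC)·ω_k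 + D/φ. -/
set_option maxHeartbeats 1600000


/-- Analytic core of Theorem 1 (L² convergence rate) of the paper, stated
for real sequences: the error sequence `t_k` satisfying the perturbed
contraction recursion is bounded by `(λ₀ + 12QC)·ω_k + D/φ` for `k ≥ k₀`. -/
theorem csgld_l2_convergence
    (φ G C₀ C₁ Q C D : ℝ)
    (hφ : 0 < φ) (hG : 0 < G) (hC₀ : 0 < C₀) (hC₁ : 0 < C₁)
    (hQ : 0 < Q) (hC : 0 < C) (hD : 0 < D)
    (ω : ℕ → ℝ) (hωpos : ∀ k, 0 < ω k) (hωanti : ∀ k, ω (k + 1) ≤ ω k)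
    (hstep : ∀ k, ω (k + 1) - ω k + 2 * φ * ω k * ω (k + 1) ≥ C₁ * ω (k + 1) ^ 2)
    (k₀ : ℕ) (hk₀ : ω k₀ ≤ C₁ / (2 * G))
    (hfac : ∀ k ≥ k₀, 0 < 1 - 2 * ω (k + 1) * φ + G * ω (k + 1) ^ 2)
    (Δ : ℕ → ℝ) (hΔ : ∀ k, 0 ≤ Δ k ∧ Δ k ≤ D)
    (z : ℕ → ℝ) (hz : ∀ k, |z k| ≤ 2 * Q * C)
    (t : ℕ → ℝ) (htnonneg : ∀ k, 0 ≤ t k)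
    (ht : ∀ k ≥ k₀,
      t (k + 1) ≤ (1 - 2 * ω (k + 1) * φ + G * ω (k + 1) ^ 2) * t k
        + C₀ * ω (k + 1) ^ 2 + 2 * Δ k * ω (k + 1)
        + 2 * ω (k + 1) * (z k - z (k + 1)))
    (lam₀ : ℝ) (hlam₀ : lam₀ = (2 * G * D + 2 * C₀ * φ) / (C₁ * φ))
    (hinit : t k₀ ≤ lam₀ * ω k₀ + D / φ) :
    ∀ k ≥ k₀, t k ≤ (lam₀ + 12 * Q * C) * ω k + D / φ := by
  have hanti : Antitone ω := antitone_nat_of_succ_le hωanti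
  have hlam₀pos : 0 ≤ lam₀ := by
    rw [hlam₀]; positivity
  have key : ∀ k, k₀ ≤ k →
      t k ≤ lam₀ * ω k + D / φ + 2 * ω k * (2 * Q * C - z k) := by
    intro k hk
    induction k, hk using Nat.le_induction with
    | base =>
      have hzb := (abs_le.mp (hz k₀)).2
      nlinarith [hωpos k₀, hinit, mul_nonneg (hωpos k₀).le (sub_nonneg.mpr hzb)]
    | succ n hn ih =>
      have hwpos := hωpos (n + 1)
      have hωk := hωpos n
      have hρ := hfac n hn
      have hωle : ω n ≤ C₁ / (2 * G) := le_trans (hanti hn) hk₀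
      have hGω : G * ω n ≤ C₁ / 2 := by
        rw [le_div_iff₀ (by positivity)] at hωle
        nlinarith
      have h1 : (1 - 2 * ω (n+1) * φ + G * ω (n+1) ^ 2) * ω n
          ≤ ω (n+1) - C₁ / 2 * ω (n+1) ^ 2 := by
        have hs := hstep n
        nlinarith [sq_nonneg (ω (n+1))]
      have hzn := abs_le.mp (hz n)
      have hzn1 := abs_le.mp (hz (n + 1))
      have hΔn := hΔ n
      have htr := ht n hn
      have hρt : (1 - 2 * ω (n+1) * φ + G * ω (n+1) ^ 2) * t n
          ≤ (1 - 2 * ω (n+1) * φ + G * ω (n+1) ^ 2) *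
            (lam₀ * ω n + D / φ + 2 * ω n * (2 * Q * C - z n)) :=
        mul_le_mul_of_nonneg_left ih hρ.le
      have hDφ : (1 - 2 * ω (n+1) * φ + G * ω (n+1) ^ 2) * (D / φ)
          = D / φ - 2 * ω (n+1) * D + G * ω (n+1) ^ 2 * (D / φ) := by
        field_simp
      have hA : (1 - 2 * ω (n+1) * φ + G * ω (n+1) ^ 2) * (lam₀ * ω n)
          ≤ lam₀ * (ω (n+1) - C₁ / 2 * ω (n+1) ^ 2) := by
        nlinarith [mul_le_mul_of_nonneg_left h1 hlam₀pos]
      have hC' : (1 - 2 * ω (n+1) * φ + G * ω (n+1) ^ 2) * (2 * ω n * (2 * Q * C - z n))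
          ≤ 2 * (ω (n+1) - C₁ / 2 * ω (n+1) ^ 2) * (2 * Q * C - z n) := by
        have := mul_le_mul_of_nonneg_right h1 (sub_nonneg.mpr hzn.2)
        nlinarith
      have h2 : C₀ + G * (D / φ) = lam₀ * C₁ / 2 := by
        rw [hlam₀]
        field_simp
        ring
      have hkey2 : (C₀ + G * (D / φ)) * ω (n+1) ^ 2 = lam₀ * C₁ / 2 * ω (n+1) ^ 2 := by
        rw [h2]
      have hΔw : 2 * Δ n * ω (n+1) ≤ 2 * D * ω (n+1) := by
        nlinarith [hΔn.2, hwpos]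
      have hCw : 0 ≤ C₁ * ω (n+1) ^ 2 * (2 * Q * C - z n) :=
        mul_nonneg (mul_nonneg hC₁.le (sq_nonneg _)) (sub_nonneg.mpr hzn.2)
      nlinarith [htr, hρt, hDφ, hA, hC', hkey2, hΔw, hCw]
  intro k hk
  have h := key k hk
  have hzb := (abs_le.mp (hz k)).1
  nlinarith [hωpos k, mul_pos hQ hC, mul_le_mul_of_nonneg_left hzb (by linarith [hωpos k] : (0:ℝ) ≤ 2 * ω k)]
end
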